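/- arXiv:1410.1388 — 3 statements merged into one kernel-verified Lean document; each statement's English description precedes it below -/
import Mathlib

section
/- For a non-zero element λ of an affine monoid Λ, the map Φ sending a composition [ξ⁽¹⁾|…|ξ⁽ᵏ⁾] of λ to the chain { ξ⁽¹⁾ < ξ⁽¹⁾+ξ⁽²⁾ < … < ξ⁽¹⁾+…+ξ⁽ᵏ⁻¹⁾ } is an order isomorphism from the composition poset C(λ; Λ) to the poset of nonempty finite chains of the open interval (0, λ) ordered by inclusion. -/
/-- The divisibility (Frobenius) order on an additive monoid. -/
def dvdLE {Λ : Type*} [AddCommMonoid Λ] (a b : Λ) : Prop := ∃ c : Λ, a + c = b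

/-- `L` is a composition of `l`: at least two parts, all parts non-zero,
summing to `l`. -/
def IsComposition {Λ : Type*} [AddCommMonoid Λ] (l : Λ) (L : List Λ) : Prop :=
  2 ≤ L.length ∧ (∀ x ∈ L, x ≠ 0) ∧ L.sum = l

/-- `MergeStep L L'` : `L` is obtained from `L'` by merging two adjacent
parts. -/
def MergeStep {Λ : Type*} [AddCommMonoid Λ] (L L' : List Λ) : Prop :=
  ∃ (A B : List Λ) (u v : Λ), L' = A ++ u :: v :: B ∧ L = A ++ (u + v) :: B

/-- The order of the composition poset, generated by merging adjacent
parts. -/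
def CompLE {Λ : Type*} [AddCommMonoid Λ] : List Λ → List Λ → Prop :=
  Relation.ReflTransGen MergeStep


section Aux
variable {Λ : Type} [AddCancelCommMonoid Λ]

theorem frob_refl (a : Λ) : dvdLE a a := ⟨0, add_zero a⟩

theorem frob_trans {a b c : Λ} (h1 : dvdLE a b) (h2 : dvdLE b c) : dvdLE a c := by
  obtain ⟨x, hx⟩ := h1; obtain ⟨y, hy⟩ := h2
  exact ⟨x + y, by rw [← add_assoc, hx, hy]⟩

theorem frob_antisymm (hpointed : ∀ a b : Λ, a + b = 0 → a = 0 ∧ b = 0)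
    {a b : Λ} (h1 : dvdLE a b) (h2 : dvdLE b a) : a = b := by
  obtain ⟨x, hx⟩ := h1; obtain ⟨y, hy⟩ := h2
  have : a + (x + y) = a + 0 := by rw [← add_assoc, hx, hy, add_zero]
  have hxy := add_left_cancel this
  have := (hpointed x y hxy).1
  rw [← hx, this, add_zero]

theorem frob_sum_ne_zero (hpointed : ∀ a b : Λ, a + b = 0 → a = 0 ∧ b = 0)
    {L : List Λ} (hne : L ≠ []) (h : ∀ x ∈ L, x ≠ 0) : L.sum ≠ 0 := by
  induction L with
  | nil => exact absurd rfl hne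
  | cons a t ih =>
    intro hs
    rw [List.sum_cons] at hs
    exact h a (by simp) (hpointed a t.sum hs).1

/-- partial sums monotone: `i ≤ j`, `j < L.length` -/
theorem frob_S_mono (L : List Λ) {i j : ℕ} (hij : i ≤ j) :
    (L.take (j + 1)).sum = (L.take (i + 1)).sum + ((L.drop (i + 1)).take (j - i)).sum := by
  have h : j + 1 = (i + 1) + (j - i) := by omega
  rw [h, List.take_add, List.sum_append]

/-- strict: for a composition, partial sums at distinct indices `< length - 1`... in fact
`i < j < L.length` and all parts nonzero gives strict inequality -/
theorem frob_S_strict (hpointed : ∀ a b : Λ, a + b = 0 → a = 0 ∧ b = 0)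
    (L : List Λ) (hnz : ∀ x ∈ L, x ≠ 0) {i j : ℕ} (hij : i < j) (hj : j < L.length) :
    (L.take (i + 1)).sum ≠ (L.take (j + 1)).sum := by
  have hmono := frob_S_mono L (le_of_lt hij)
  set seg := (L.drop (i + 1)).take (j - i) with hseg
  have hlen : seg.length = min (j - i) (L.length - (i + 1)) := by
    simp [hseg, List.length_take, List.length_drop]
  have hsegne : seg ≠ [] := by
    have : 0 < seg.length := by rw [hlen]; omega
    exact List.ne_nil_of_length_pos this
  have hsegnz : ∀ x ∈ seg, x ≠ 0 := fun x hx =>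
    hnz x (List.mem_of_mem_drop (List.mem_of_mem_take hx))
  have hsum := frob_sum_ne_zero hpointed hsegne hsegnz
  intro he
  rw [hmono] at he
  have : (L.take (i+1)).sum + seg.sum = (L.take (i+1)).sum + 0 := by rw [add_zero]; exact he.symm
  exact hsum (add_left_cancel this)

end Aux

section Phi
variable {Λ : Type} [AddCancelCommMonoid Λ] [DecidableEq Λ]


def phiSet (L : List Λ) : Finset Λ :=
  (Finset.range (L.length - 1)).image (fun i => (L.take (i + 1)).sum)

theorem phiSet_nonempty {l : Λ} {L : List Λ} (h : IsComposition l L) : (phiSet L).Nonempty := by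
  refine Finset.Nonempty.image ⟨0, ?_⟩ _
  rw [Finset.mem_range]; have := h.1; omega

theorem phiSet_mem_props (hpointed : ∀ a b : Λ, a + b = 0 → a = 0 ∧ b = 0)
    {l : Λ} {L : List Λ} (h : IsComposition l L) :
    ∀ x ∈ phiSet L, x ≠ 0 ∧ dvdLE x l ∧ x ≠ l := by
  obtain ⟨hlen, hnz, hsum⟩ := h
  intro x hx
  simp only [phiSet, Finset.mem_image, Finset.mem_range] at hx
  obtain ⟨i, hi, rfl⟩ := hx
  have htk : L.take (i+1) ≠ [] := by
    have : 0 < (L.take (i+1)).length := by rw [List.length_take]; omega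
    exact List.ne_nil_of_length_pos this
  have hdr : L.drop (i+1) ≠ [] := by
    have : 0 < (L.drop (i+1)).length := by rw [List.length_drop]; omega
    exact List.ne_nil_of_length_pos this
  have h1 : (L.take (i+1)).sum ≠ 0 :=
    frob_sum_ne_zero hpointed htk (fun x hx => hnz x (List.mem_of_mem_take hx))
  have hdsum : (L.take (i+1)).sum + (L.drop (i+1)).sum = l := by
    rw [List.sum_take_add_sum_drop, hsum]
  have h2 : dvdLE (L.take (i+1)).sum l := ⟨_, hdsum⟩
  refine ⟨h1, h2, ?_⟩
  intro he
  have hz : (L.drop (i+1)).sum ≠ 0 :=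
    frob_sum_ne_zero hpointed hdr (fun x hx => hnz x (List.mem_of_mem_drop hx))
  apply hz
  apply add_left_cancel (a := (L.take (i+1)).sum)
  rw [hdsum, add_zero, he]

theorem phiSet_chain {l : Λ} {L : List Λ} (h : IsComposition l L) :
    IsChain dvdLE ((phiSet L : Finset Λ) : Set Λ) := by
  intro x hx y hy hxy
  simp only [phiSet, Finset.coe_image, Finset.coe_range, Set.mem_image, Set.mem_Iio] at hx hy
  obtain ⟨i, hi, rfl⟩ := hx
  obtain ⟨j, hj, rfl⟩ := hy
  rcases le_total i j with hij | hij
  · exact Or.inl ⟨_, (frob_S_mono L hij).symm⟩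
  · exact Or.inr ⟨_, (frob_S_mono L hij).symm⟩

end Phi

section Inj
variable {Λ : Type} [AddCancelCommMonoid Λ] [DecidableEq Λ]

/-- strict divisibility -/
def sd {Λ : Type} [AddCommMonoid Λ] (a b : Λ) : Prop := dvdLE a b ∧ a ≠ b

theorem frob_listEq (hpointed : ∀ a b : Λ, a + b = 0 → a = 0 ∧ b = 0) :
    ∀ P Q : List Λ, P.Pairwise sd → Q.Pairwise sd → P.toFinset = Q.toFinset → P = Q := by
  intro P
  induction P with
  | nil =>
    intro Q _ _ he
    cases Q with
    | nil => rfl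
    | cons b Q' => simp at he; exact absurd he.symm (by simp)
  | cons a P' ih =>
    intro Q hP hQ he
    cases Q with
    | nil => simp at he
    | cons b Q' =>
      have hab : a = b := by
        by_contra hne
        have ha : a ∈ (b :: Q').toFinset := by rw [← he]; simp
        simp only [List.mem_toFinset, List.mem_cons] at ha
        have hba : sd b a := by
          rcases ha with h | h
          · exact absurd h hne
          · exact (List.pairwise_cons.mp hQ).1 a h
        have hb : b ∈ (a :: P').toFinset := by rw [he]; simp
        simp only [List.mem_toFinset, List.mem_cons] at hb
        have hab' : sd a b := by
          rcases hb with h | h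
          · exact absurd h.symm hne
          · exact (List.pairwise_cons.mp hP).1 b h
        exact hne (frob_antisymm hpointed hab'.1 hba.1)
      subst hab
      have hnP : a ∉ P'.toFinset := by
        simp only [List.mem_toFinset]
        intro hmem
        exact ((List.pairwise_cons.mp hP).1 a hmem).2 rfl
      have hnQ : a ∉ Q'.toFinset := by
        simp only [List.mem_toFinset]
        intro hmem
        exact ((List.pairwise_cons.mp hQ).1 a hmem).2 rfl
      have he' : P'.toFinset = Q'.toFinset := by
        have h1 : (a :: P').toFinset = insert a P'.toFinset := by simp
        have h2 : (a :: Q').toFinset = insert a Q'.toFinset := by simp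
        rw [h1, h2] at he
        have := congrArg (fun s => Finset.erase s a) he
        simpa [Finset.erase_insert hnP, Finset.erase_insert hnQ] using this
      rw [ih Q' (List.pairwise_cons.mp hP).2 (List.pairwise_cons.mp hQ).2 he']

def psList (L : List Λ) : List Λ := (List.range (L.length - 1)).map (fun i => (L.take (i + 1)).sum)

theorem psList_pairwise (hpointed : ∀ a b : Λ, a + b = 0 → a = 0 ∧ b = 0)
    {l : Λ} {L : List Λ} (h : IsComposition l L) : (psList L).Pairwise sd := by
  rw [psList, List.pairwise_map]
  refine (List.pairwise_lt_range (n := _)).imp_of_mem ?_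
  intro i j hi hj hij
  rw [List.mem_range] at hi hj
  have hjlen : j < L.length := by have := h.1; omega
  exact ⟨⟨_, (frob_S_mono L (le_of_lt hij)).symm⟩,
    frob_S_strict hpointed L h.2.1 hij hjlen⟩

theorem psList_toFinset (L : List Λ) : (psList L).toFinset = phiSet L := by
  ext x
  simp [psList, phiSet]

theorem phiSet_injective (hpointed : ∀ a b : Λ, a + b = 0 → a = 0 ∧ b = 0)
    {l : Λ} {L M : List Λ} (hL : IsComposition l L) (hM : IsComposition l M)
    (he : phiSet L = phiSet M) : L = M := by
  have hps : psList L = psList M := by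
    apply frob_listEq hpointed _ _ (psList_pairwise hpointed hL) (psList_pairwise hpointed hM)
    rw [psList_toFinset, psList_toFinset, he]
  have hlen : L.length = M.length := by
    have h1 : (psList L).length = L.length - 1 := by simp [psList]
    have h2 : (psList M).length = M.length - 1 := by simp [psList]
    have := hL.1; have := hM.1
    rw [hps] at h1
    omega
  -- partial sums agree for all k ≤ length
  have hT : ∀ k, k ≤ L.length → (L.take k).sum = (M.take k).sum := by
    intro k hk
    rcases Nat.eq_zero_or_pos k with rfl | hk0
    · simp
    rcases eq_or_lt_of_le hk with rfl | hklt
    · rw [List.take_of_length_le (le_refl _), List.take_of_length_le (by omega)]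
      rw [hL.2.2, hM.2.2]
    · -- k - 1 < L.length - 1
      have hkm : k - 1 < L.length - 1 := by omega
      have := congrArg (fun P : List Λ => P[k - 1]?) hps
      simp only [psList, List.getElem?_map] at this
      have hr1 : (List.range (L.length - 1))[k-1]? = some (k-1) :=
        List.getElem?_range hkm
      have hr2 : (List.range (M.length - 1))[k-1]? = some (k-1) :=
        List.getElem?_range (by omega)
      rw [hr1, hr2] at this
      simp only [Option.map_some] at this
      have hk1 : k - 1 + 1 = k := by omega
      rw [hk1] at this
      exact Option.some.inj this
  apply List.ext_getElem hlen
  intro n h1 h2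
  have e1 := List.sum_take_succ L n h1
  have e2 := List.sum_take_succ M n h2
  have hTn := hT n (le_of_lt h1)
  have hTn1 := hT (n+1) (by omega)
  rw [e1, e2, hTn] at hTn1
  exact add_left_cancel hTn1

end Inj

section Surj
variable {Λ : Type} [AddCancelCommMonoid Λ] [DecidableEq Λ]

theorem frob_exists_greatest :
    ∀ s : Finset Λ, IsChain dvdLE (s : Set Λ) → s.Nonempty → ∃ g ∈ s, ∀ y ∈ s, dvdLE y g := by
  classical
  intro s
  induction s using Finset.induction with
  | empty => intro _ h; exact absurd h (by simp)
  | @insert a s ha ih =>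
    intro hchain _
    have hsub : IsChain dvdLE (s : Set Λ) := hchain.mono (by intro x hx; simp at hx ⊢; tauto)
    rcases s.eq_empty_or_nonempty with rfl | hne
    · exact ⟨a, by simp, by simp [frob_refl]⟩
    · obtain ⟨g, hg, hgr⟩ := ih hsub hne
      have hag : a ≠ g := fun he => ha (he ▸ hg)
      have hcmp := hchain (by simp : a ∈ (↑(insert a s) : Set Λ))
        (by simp [hg] : g ∈ (↑(insert a s) : Set Λ)) hag
      rcases hcmp with h | h
      · refine ⟨g, by simp [hg], ?_⟩
        intro y hy
        rcases Finset.mem_insert.mp hy with rfl | hy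
        · exact h
        · exact hgr y hy
      · refine ⟨a, by simp, ?_⟩
        intro y hy
        rcases Finset.mem_insert.mp hy with rfl | hy
        · exact frob_refl y
        · exact frob_trans (hgr y hy) h

theorem phiSet_surj (hpointed : ∀ a b : Λ, a + b = 0 → a = 0 ∧ b = 0) :
    ∀ (n : ℕ) (l : Λ), l ≠ 0 → ∀ s : Finset Λ, s.card = n → s.Nonempty →
      (∀ x ∈ s, x ≠ 0 ∧ dvdLE x l ∧ x ≠ l) → IsChain dvdLE (s : Set Λ) →
      ∃ L, IsComposition l L ∧ phiSet L = s := by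
  intro n
  induction n using Nat.strong_induction_on with
  | _ n ih =>
    intro l hl s hcard hne hmem hchain
    obtain ⟨g, hg, hgr⟩ := frob_exists_greatest s hchain hne
    obtain ⟨hg0, ⟨c, hgc⟩, hgl⟩ := hmem g hg
    have hc0 : c ≠ 0 := by rintro rfl; exact hgl (by rw [← hgc, add_zero])
    rcases Nat.lt_or_ge n 2 with hn | hn
    · -- s = {g}
      have hs : s = {g} := by
        apply Finset.eq_singleton_iff_unique_mem.mpr
        refine ⟨hg, ?_⟩
        intro y hy
        by_contra hne'
        have h1 : s.card ≤ 1 := by omega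
        have : ({y, g} : Finset Λ) ⊆ s := by
          intro z hz; rcases Finset.mem_insert.mp hz with rfl | hz
          · exact hy
          · simpa using (Finset.mem_singleton.mp hz ▸ hg)
        have h2 : ({y, g} : Finset Λ).card = 2 := Finset.card_pair hne'
        have := Finset.card_le_card this
        omega
      refine ⟨[g, c], ⟨by simp, ?_, by simp [hgc]⟩, ?_⟩
      · intro x hx
        rcases List.mem_cons.mp hx with rfl | hx
        · exact hg0
        · rcases List.mem_cons.mp hx with rfl | hx
          · exact hc0
          · simp at hx
      · rw [hs]
        ext x
        simp [phiSet, Finset.mem_range]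
    · -- card ≥ 2; peel off g
      set s' := s.erase g with hs'
      have hcard' : s'.card = n - 1 := by rw [hs', Finset.card_erase_of_mem hg, hcard]
      have hne' : s'.Nonempty := Finset.card_pos.mp (by omega)
      have hmem' : ∀ x ∈ s', x ≠ 0 ∧ dvdLE x g ∧ x ≠ g := by
        intro x hx
        have hxs : x ∈ s := Finset.mem_of_mem_erase hx
        exact ⟨(hmem x hxs).1, hgr x hxs, Finset.ne_of_mem_erase hx⟩
      have hchain' : IsChain dvdLE (s' : Set Λ) :=
        hchain.mono (Finset.coe_subset.mpr (Finset.erase_subset _ _))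
      obtain ⟨L', hL', hPhi'⟩ := ih (n-1) (by omega) g hg0 s' hcard' hne' hmem' hchain'
      have hlen2 : 2 ≤ L'.length := hL'.1
      refine ⟨L' ++ [c], ⟨by simp; omega, ?_, by simp [hL'.2.2, hgc]⟩, ?_⟩
      · intro x hx
        rcases List.mem_append.mp hx with hx | hx
        · exact hL'.2.1 x hx
        · simp at hx; subst hx; exact hc0
      · -- phiSet (L' ++ [c]) = insert g (phiSet L') = s
        have hlen' : 2 ≤ L'.length := hL'.1
        have hlen : (L' ++ [c]).length - 1 = L'.length := by simp
        have hkey : phiSet (L' ++ [c]) = insert g (phiSet L') := by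
          rw [phiSet, hlen]
          have : L'.length = (L'.length - 1) + 1 := by omega
          rw [this, Finset.range_add_one, Finset.image_insert]
          congr 1
          · -- image of top index is g
            have h1 : L'.length - 1 + 1 = L'.length := by omega
            rw [h1, List.take_append_of_le_length (le_refl _), List.take_length, hL'.2.2]
          · -- lower indices agree with phiSet L'
            rw [phiSet]
            apply Finset.image_congr
            intro i hi
            simp only [Finset.mem_coe, Finset.mem_range] at hi
            show (List.take (i + 1) (L' ++ [c])).sum = (List.take (i + 1) L').sum
            rw [List.take_append_of_le_length (by omega)]
        rw [hkey, hPhi', hs', Finset.insert_erase hg]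

end Surj

section Merge
variable {Λ : Type} [AddCancelCommMonoid Λ] [DecidableEq Λ]

theorem merge_S_low (A B : List Λ) (u v : Λ) {i : ℕ} (h : i < A.length) :
    ((A ++ (u+v)::B).take (i+1)).sum = ((A ++ u::v::B).take (i+1)).sum := by
  rw [List.take_append_of_le_length (by omega), List.take_append_of_le_length (by omega)]

theorem merge_S_high (A B : List Λ) (u v : Λ) {i : ℕ} (h : A.length ≤ i) :
    ((A ++ (u+v)::B).take (i+1)).sum = ((A ++ u::v::B).take (i+2)).sum := by
  obtain ⟨k, rfl⟩ := Nat.exists_eq_add_of_le h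
  rw [List.take_append, List.take_append]
  have h1 : A.length + k + 1 - A.length = k + 1 := by omega
  have h2 : A.length + k + 2 - A.length = k + 2 := by omega
  rw [h1, h2,
    List.take_of_length_le (show A.length ≤ A.length + k + 1 by omega),
    List.take_of_length_le (show A.length ≤ A.length + k + 2 by omega)]
  simp [add_assoc]

theorem merge_subset {L L' : List Λ} (h : MergeStep L L') : phiSet L ⊆ phiSet L' := by
  obtain ⟨A, B, u, v, hL', hL⟩ := h
  subst hL'; subst hL
  intro x hx
  simp only [phiSet, Finset.mem_image, Finset.mem_range] at hx ⊢
  obtain ⟨i, hi, rfl⟩ := hx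
  have hm1 : (A ++ (u+v)::B).length = A.length + B.length + 1 := by simp; omega
  have hm2 : (A ++ u::v::B).length = A.length + B.length + 2 := by simp; omega
  rw [hm1] at hi
  rcases Nat.lt_or_ge i A.length with hcase | hcase
  · exact ⟨i, by omega, (merge_S_low A B u v hcase).symm⟩
  · exact ⟨i + 1, by omega, (merge_S_high A B u v hcase).symm⟩

theorem compLE_subset {L M : List Λ} (h : CompLE L M) : phiSet L ⊆ phiSet M := by
  induction h with
  | refl => exact Finset.Subset.refl _
  | tail _ hstep ih => exact ih.trans (merge_subset hstep)

end Merge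

section Back
variable {Λ : Type} [AddCancelCommMonoid Λ] [DecidableEq Λ]

theorem phiSet_card (hpointed : ∀ a b : Λ, a + b = 0 → a = 0 ∧ b = 0)
    {l : Λ} {L : List Λ} (h : IsComposition l L) : (phiSet L).card = L.length - 1 := by
  rw [phiSet, Finset.card_image_of_injOn, Finset.card_range]
  intro i hi j hj hij
  simp only [Finset.coe_range, Set.mem_Iio] at hi hj
  by_contra hne
  rcases Nat.lt_or_ge i j with hc | hc
  · exact frob_S_strict hpointed L h.2.1 hc (by have := h.1; omega) hij
  · have hc' : j < i := by omega
    exact frob_S_strict hpointed L h.2.1 hc' (by have := h.1; omega) hij.symm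

theorem merge_phiSet_erase (hpointed : ∀ a b : Λ, a + b = 0 → a = 0 ∧ b = 0)
    (A B : List Λ) (u v : Λ) (hnz : ∀ x ∈ A ++ u :: v :: B, x ≠ 0) :
    phiSet (A ++ (u+v) :: B) =
      (phiSet (A ++ u :: v :: B)).erase (((A ++ u :: v :: B).take (A.length + 1)).sum) := by
  set a := A.length with ha
  set b := B.length with hb
  have hm : (A ++ u :: v :: B).length = a + b + 2 := by simp; omega
  have hm' : (A ++ (u+v) :: B).length = a + b + 1 := by simp; omega
  ext y
  simp only [phiSet, Finset.mem_image, Finset.mem_range, Finset.mem_erase, hm, hm']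
  constructor
  · rintro ⟨i, hi, rfl⟩
    rcases Nat.lt_or_ge i a with hc | hc
    · refine ⟨?_, i, by omega, (merge_S_low A B u v hc).symm⟩
      rw [merge_S_low A B u v hc]
      exact frob_S_strict hpointed _ hnz hc (by rw [hm]; omega)
    · refine ⟨?_, i + 1, by omega, (merge_S_high A B u v hc).symm⟩
      rw [merge_S_high A B u v hc]
      intro he
      exact frob_S_strict hpointed _ hnz (show a < i + 1 by omega) (by rw [hm]; omega) he.symm
  · rintro ⟨hne, i, hi, rfl⟩
    have hia : i ≠ a := by rintro rfl; exact hne rfl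
    rcases Nat.lt_or_ge i a with hc | hc
    · exact ⟨i, by omega, merge_S_low A B u v hc⟩
    · have hc' : a ≤ i - 1 := by omega
      refine ⟨i - 1, by omega, ?_⟩
      have hieq : i - 1 + 2 = i + 1 := by omega
      rw [merge_S_high A B u v hc', hieq]

theorem frob_back (hpointed : ∀ a b : Λ, a + b = 0 → a = 0 ∧ b = 0) {l : Λ} :
    ∀ (m : ℕ) (M : List Λ), M.length = m → ∀ L, IsComposition l L → IsComposition l M →
      phiSet L ⊆ phiSet M → CompLE L M := by
  intro m
  induction m using Nat.strong_induction_on with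
  | _ m ih =>
    intro M hMlen L hL hM hsub
    by_cases heq : phiSet L = phiSet M
    · rw [phiSet_injective hpointed hL hM heq]
      exact Relation.ReflTransGen.refl
    · -- proper subset: find x ∈ ΦM \ ΦL
      have hss : phiSet L ⊂ phiSet M := ⟨hsub, fun h => heq (Finset.Subset.antisymm hsub h)⟩
      obtain ⟨x, hxM, hxL⟩ := Finset.exists_of_ssubset hss
      simp only [phiSet, Finset.mem_image, Finset.mem_range] at hxM
      obtain ⟨j, hj, rfl⟩ := hxM
      rw [hMlen] at hj
      -- m ≥ 3
      have hcL : (phiSet L).card = L.length - 1 := phiSet_card hpointed hL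
      have hcM : (phiSet M).card = m - 1 := by rw [phiSet_card hpointed hM, hMlen]
      have hm3 : 3 ≤ m := by
        have h1 := Finset.card_lt_card hss
        have := hL.1; have := hM.1
        omega
      -- decompose M
      have hjM : j < M.length := by omega
      have hj1M : j + 1 < M.length := by omega
      set A := M.take j with hA
      set B := M.drop (j+2) with hB
      set u := M[j] with hu
      set v := M[j+1] with hv
      have hAlen : A.length = j := by rw [hA, List.length_take]; omega
      have hdecomp : M = A ++ u :: v :: B := by
        conv_lhs => rw [← List.take_append_drop j M]
        congr 1
        rw [List.drop_eq_getElem_cons hjM, List.drop_eq_getElem_cons hj1M]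
      set M' := A ++ (u + v) :: B with hM'
      have hstep : MergeStep M' M := ⟨A, B, u, v, hdecomp, rfl⟩
      have hnzM : ∀ y ∈ A ++ u :: v :: B, y ≠ 0 := fun y hy => hM.2.1 y (hdecomp ▸ hy)
      have hM'len : M'.length = m - 1 := by
        rw [hM']
        have : (A ++ u :: v :: B).length = M.length := by rw [← hdecomp]
        simp at this ⊢
        omega
      have hM'comp : IsComposition l M' := by
        refine ⟨by omega, ?_, ?_⟩
        · intro y hy
          rw [hM'] at hy
          rcases List.mem_append.mp hy with hy | hy
          · exact hnzM y (List.mem_append.mpr (Or.inl hy))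
          · rcases List.mem_cons.mp hy with rfl | hy
            · intro h0
              exact hnzM u (by simp) (hpointed u v h0).1
            · exact hnzM y (by simp [hy])
        · have h1 : M.sum = l := hM.2.2
          rw [hdecomp] at h1
          rw [hM']
          simp only [List.sum_append, List.sum_cons] at h1 ⊢
          rw [← h1]
          rw [add_assoc]
      have herase : phiSet M' = (phiSet M).erase ((M.take (j+1)).sum) := by
        rw [hM', merge_phiSet_erase hpointed A B u v hnzM]
        congr 1
        · rw [← hdecomp]
        · rw [← hdecomp, hAlen]
      have hsub' : phiSet L ⊆ phiSet M' := by
        rw [herase]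
        intro y hy
        rw [Finset.mem_erase]
        exact ⟨fun h => hxL (h ▸ hy), hsub hy⟩
      have hLM' : CompLE L M' := ih (m-1) (by omega) M' hM'len L hL hM'comp hsub'
      exact Relation.ReflTransGen.tail hLM' hstep

end Back

/-- partial sums give an order isomorphism `Φ` from the
composition poset `C(λ; Λ)` onto the poset of nonempty finite chains of the
open divisibility interval `(0, λ)`, ordered by inclusion. -/
theorem stmt9 {Λ : Type} [AddCancelCommMonoid Λ] [AddMonoid.FG Λ] [DecidableEq Λ]
    (hpointed : ∀ a b : Λ, a + b = 0 → a = 0 ∧ b = 0)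
    (l : Λ) (hl : l ≠ 0) :
    ∃ Φ : {L : List Λ // IsComposition l L} →
        {s : Finset Λ // s.Nonempty ∧ (∀ x ∈ s, x ≠ 0 ∧ dvdLE x l ∧ x ≠ l) ∧
          IsChain dvdLE (s : Set Λ)},
      Function.Bijective Φ ∧
      (∀ L : {L : List Λ // IsComposition l L},
        ((Φ L : Finset Λ) : Finset Λ) =
          (Finset.range (L.1.length - 1)).image (fun i => (L.1.take (i + 1)).sum)) ∧
      (∀ L M : {L : List Λ // IsComposition l L},
        CompLE L.1 M.1 ↔ (Φ L : Finset Λ) ⊆ (Φ M : Finset Λ)) := by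
  refine ⟨fun L => ⟨phiSet L.1, phiSet_nonempty L.2, phiSet_mem_props hpointed L.2,
    phiSet_chain L.2⟩, ⟨?_, ?_⟩, ?_, ?_⟩
  · intro L M h
    apply Subtype.ext
    exact phiSet_injective hpointed L.2 M.2 (congrArg Subtype.val h)
  · rintro ⟨t, hne, hmem, hchain⟩
    obtain ⟨L, hL, hphi⟩ := phiSet_surj hpointed t.card l hl t rfl hne hmem hchain
    exact ⟨⟨L, hL⟩, Subtype.ext hphi⟩
  · intro L
    rfl
  · intro L M
    exact ⟨fun h => compLE_subset h,
      fun h => frob_back hpointed M.1.length M.1 rfl L.1 L.2 M.2 h⟩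
end

section
/- Let φ : Λ → Λ' be a proper homomorphism of affine monoids and λ ∈ Λ non-zero, λ' = φ(λ). For any composition ξ ∈ C(λ; Λ) and η ∈ C(λ'; Λ') with φ∗(ξ) ≥ η, there exists a unique ξ' ∈ C(λ; Λ) with ξ' ≤ ξ and φ∗(ξ') = η. -/
section Aux
variable {Λ Λ' : Type*} [AddCancelCommMonoid Λ] [AddCancelCommMonoid Λ']

theorem mergeStep_sum' {L L' : List Λ} (h : MergeStep L L') : L.sum = L'.sum := by
  obtain ⟨A, B, u, v, h1, h2⟩ := h
  simp [h1, h2, add_assoc]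

theorem compLE_sum' {L L' : List Λ} (h : CompLE L L') : L.sum = L'.sum := by
  induction h with
  | refl => rfl
  | tail _ hs ih => exact ih.trans (mergeStep_sum' hs)

theorem sum_eq_zero_pointed (hp : ∀ a b : Λ, a + b = 0 → a = 0 ∧ b = 0)
    {L : List Λ} (h : L.sum = 0) : ∀ x ∈ L, x = 0 := by
  induction L with
  | nil => simp
  | cons a L ih =>
    simp only [List.sum_cons] at h
    obtain ⟨h1, h2⟩ := hp _ _ h
    intro x hx
    rcases List.mem_cons.1 hx with rfl | hx
    · exact h1
    · exact ih h2 x hx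

theorem lift_step (φ : Λ →+ Λ') {L : List Λ'} {ξ : List Λ}
    (h : MergeStep L (ξ.map φ)) : ∃ ζ : List Λ, MergeStep ζ ξ ∧ ζ.map φ = L := by
  obtain ⟨A, B, u, v, h1, h2⟩ := h
  rw [List.map_eq_append_iff] at h1
  obtain ⟨A0, r, rfl, hA0, hr⟩ := h1
  rw [List.map_eq_cons_iff] at hr
  obtain ⟨x, r1, rfl, hx, hr1⟩ := hr
  rw [List.map_eq_cons_iff] at hr1
  obtain ⟨y, B0, rfl, hy, hB0⟩ := hr1
  refine ⟨A0 ++ (x + y) :: B0, ⟨A0, B0, x, y, rfl, rfl⟩, ?_⟩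
  simp [h2, hA0, hB0, hx, hy]

theorem lift_chain (φ : Λ →+ Λ') {η : List Λ'} {ξ : List Λ}
    (h : CompLE η (ξ.map φ)) : ∃ ζ : List Λ, CompLE ζ ξ ∧ ζ.map φ = η := by
  induction h using Relation.ReflTransGen.head_induction_on with
  | refl => exact ⟨ξ, Relation.ReflTransGen.refl, rfl⟩
  | head hs _ ih =>
    obtain ⟨ζ, hζ, rfl⟩ := ih
    obtain ⟨ζ', hs', hζ'⟩ := lift_step φ hs
    exact ⟨ζ', Relation.ReflTransGen.head hs' hζ, hζ'⟩

theorem compLE_chunks {ζ ξ : List Λ} (h : CompLE ζ ξ) :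
    ∃ P : List (List Λ), (∀ c ∈ P, c ≠ []) ∧ P.flatten = ξ ∧ P.map List.sum = ζ := by
  induction h using Relation.ReflTransGen.head_induction_on with
  | refl =>
    refine ⟨ξ.map (fun x => [x]), ?_, ?_, ?_⟩
    · intro c hc; simp only [List.mem_map] at hc; obtain ⟨x, -, rfl⟩ := hc; simp
    · induction ξ <;> simp [*]
    · induction ξ <;> simp [*]
  | head hs _ ih =>
    obtain ⟨P, hP, hjoin, hsum⟩ := ih
    obtain ⟨A, B, u, v, h1, h2⟩ := hs
    rw [h1, List.map_eq_append_iff] at hsum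
    obtain ⟨P1, r, rfl, hPA, hr⟩ := hsum
    rw [List.map_eq_cons_iff] at hr
    obtain ⟨p, r1, rfl, hp, hr1⟩ := hr
    rw [List.map_eq_cons_iff] at hr1
    obtain ⟨q, P2, rfl, hq, hP2⟩ := hr1
    refine ⟨P1 ++ (p ++ q) :: P2, ?_, ?_, ?_⟩
    · intro c hc
      rcases List.mem_append.1 hc with hc | hc
      · exact hP c (by simp [hc])
      · rcases List.mem_cons.1 hc with rfl | hc
        · intro h'
          exact hP p (by simp) (List.append_eq_nil_iff.1 h').1
        · exact hP c (by simp [hc])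
    · rw [← hjoin]; simp
    · simp [h2, hPA, hP2, hp, hq]

theorem prefix_cancel (hp : ∀ a b : Λ, a + b = 0 → a = 0 ∧ b = 0)
    (φ : Λ →+ Λ') (hproper : ∀ a : Λ, φ a = 0 → a = 0)
    {p d rest : List Λ} (hnz : ∀ x ∈ p ++ d ++ rest, x ≠ 0)
    (heq : φ p.sum = φ (p ++ d).sum) : d = [] := by
  rw [List.sum_append, map_add, left_eq_add] at heq
  have hd0 : d.sum = 0 := hproper _ heq
  rcases d with - | ⟨x, d⟩
  · rfl
  · exfalso
    exact hnz x (by simp) (sum_eq_zero_pointed hp hd0 x (by simp))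

theorem chunks_unique (hp : ∀ a b : Λ, a + b = 0 → a = 0 ∧ b = 0)
    (φ : Λ →+ Λ') (hproper : ∀ a : Λ, φ a = 0 → a = 0) :
    ∀ P₁ P₂ : List (List Λ), P₁.flatten = P₂.flatten →
    (∀ x ∈ P₁.flatten, x ≠ 0) → (∀ c ∈ P₁, c ≠ []) → (∀ c ∈ P₂, c ≠ []) →
    P₁.map (fun c => φ c.sum) = P₂.map (fun c => φ c.sum) → P₁ = P₂ := by
  intro P₁
  induction P₁ with
  | nil =>
    intro P₂ _ _ _ _ hmap
    exact (List.map_eq_nil_iff.1 hmap.symm).symm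
  | cons p P₁ ih =>
    intro P₂ hjoin hnz h1 h2 hmap
    rcases P₂ with - | ⟨q, P₂⟩
    · exact absurd hmap (by simp)
    simp only [List.map_cons, List.cons.injEq] at hmap
    obtain ⟨hφ, hmap⟩ := hmap
    simp only [List.flatten_cons] at hjoin hnz
    have hpq : p = q := by
      rcases List.append_eq_append_iff.1 hjoin with ⟨d, hd, -⟩ | ⟨d, hd, hrest⟩
      · have : d = [] := by
          refine prefix_cancel hp φ hproper (rest := P₂.flatten) ?_ (by rw [← hd]; exact hφ)
          intro x hx
          refine hnz x ?_
          rw [hjoin, hd]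
          simpa [List.append_assoc] using hx
        simp [hd, this]
      · have : d = [] := by
          refine prefix_cancel hp φ hproper (rest := P₁.flatten) ?_ (by rw [← hd]; exact hφ.symm)
          intro x hx
          refine hnz x ?_
          rw [hd]
          simpa [List.append_assoc] using hx
        simp [hd, this]
    subst hpq
    have hjoin' : P₁.flatten = P₂.flatten := by
      exact List.append_cancel_left hjoin
    have := ih P₂ hjoin' (fun x hx => hnz x (by simp [hx]))
      (fun c hc => h1 c (by simp [hc])) (fun c hc => h2 c (by simp [hc])) hmap
    rw [this]

end Aux

/-- for a proper homomorphism `φ : Λ → Λ'` of affine monoids,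
`ξ ∈ C(λ; Λ)` and `η ∈ C(φ λ; Λ')` with `η ≤ φ∗ ξ`, there is a unique
`ξ' ∈ C(λ; Λ)` with `ξ' ≤ ξ` and `φ∗ ξ' = η`. -/
theorem stmt11 {Λ Λ' : Type*} [AddCancelCommMonoid Λ] [AddCancelCommMonoid Λ']
    [AddMonoid.FG Λ] [AddMonoid.FG Λ']
    (hpointed : ∀ a b : Λ, a + b = 0 → a = 0 ∧ b = 0)
    (hpointed' : ∀ a b : Λ', a + b = 0 → a = 0 ∧ b = 0)
    (φ : Λ →+ Λ') (hproper : ∀ a : Λ, φ a = 0 → a = 0)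
    (l : Λ) (hl : l ≠ 0)
    (ξ : List Λ) (hξ : IsComposition l ξ)
    (η : List Λ') (hη : IsComposition (φ l) η)
    (h : CompLE η (ξ.map φ)) :
    ∃! ξ' : List Λ, IsComposition l ξ' ∧ CompLE ξ' ξ ∧ ξ'.map φ = η := by
  obtain ⟨ξ₀, hξ₀le, hξ₀map⟩ := lift_chain φ h
  obtain ⟨hlen, hnz, hsum⟩ := hξ
  obtain ⟨hlen', hnz', -⟩ := hη
  have hcomp : IsComposition l ξ₀ := by
    refine ⟨?_, ?_, ?_⟩
    · have : ξ₀.length = η.length := by rw [← hξ₀map, List.length_map]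
      omega
    · intro x hx hx0
      exact hnz' (φ x) (by rw [← hξ₀map]; exact List.mem_map_of_mem (f := φ) hx) (by simp [hx0])
    · exact (compLE_sum' hξ₀le).trans hsum
  refine ⟨ξ₀, ⟨hcomp, hξ₀le, hξ₀map⟩, ?_⟩
  rintro y ⟨-, hyle, hymap⟩
  obtain ⟨P₁, hP₁ne, hP₁j, hP₁s⟩ := compLE_chunks hyle
  obtain ⟨P₂, hP₂ne, hP₂j, hP₂s⟩ := compLE_chunks hξ₀le
  have hmap : P₁.map (fun c => φ c.sum) = P₂.map (fun c => φ c.sum) := by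
    have e1 : P₁.map (fun c => φ c.sum) = η := by
      rw [← hymap, ← hP₁s, List.map_map]; rfl
    have e2 : P₂.map (fun c => φ c.sum) = η := by
      rw [← hξ₀map, ← hP₂s, List.map_map]; rfl
    rw [e1, e2]
  have := chunks_unique hpointed φ hproper P₁ P₂ (by rw [hP₁j, hP₂j])
    (fun x hx => hnz x (hP₁j ▸ hx)) hP₁ne hP₂ne hmap
  rw [← hP₁s, ← hP₂s, this]
end

section
/- Let Λ₁, Λ₂ be affine monoids with reducible elements ρ₁ ∈ Λ₁, ρ₂ ∈ Λ₂, and let Λ be the quotient of Λ₁ ⊕ Λ₂ by the smallest monoid congruence identifying ρ₁ with ρ₂. Then for every λ ∈ Λ there exist unique n ∈ ℕ, λ̂₁ ∈ Λ̂₁, λ̂₂ ∈ Λ̂₂ with nρ + λ̂₁ + λ̂₂ = λ, where ρ is the common class of ρ₁, ρ₂, Λ̂₁ = { μ ∈ Λ₁ : μ ≱ ρ₁ } and Λ̂₂ = { μ ∈ Λ₂ : μ ≱ ρ₂ }. -/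
/-- The smallest additive congruence on `Λ₁ ⊕ Λ₂` identifying `ρ₁ ∈ Λ₁` with
`ρ₂ ∈ Λ₂`. -/
def glueCon {Λ₁ Λ₂ : Type*} [AddCommMonoid Λ₁] [AddCommMonoid Λ₂]
    (ρ₁ : Λ₁) (ρ₂ : Λ₂) : AddCon (Λ₁ × Λ₂) :=
  addConGen (fun x y : Λ₁ × Λ₂ => x = (ρ₁, 0) ∧ y = ((0 : Λ₁), ρ₂))

section Helpers

variable {Λ : Type*} [AddCancelCommMonoid Λ]

lemma no_step_of_not_ge {ρ y : Λ} (hy : ¬ ∃ μ : Λ, ρ + μ = y) {x : Λ} {d : ℕ}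
    (h : x + d • ρ = y) : d = 0 := by
  cases d with
  | zero => rfl
  | succ e =>
    exact absurd ⟨x + e • ρ, by rw [← h, succ_nsmul]; abel⟩ hy

lemma cancel_nsmul_aux {ρ x y : Λ} {a b : ℕ}
    (h : x + b • ρ = y + a • ρ)
    (hx : ¬ ∃ μ : Λ, ρ + μ = x) (hy : ¬ ∃ μ : Λ, ρ + μ = y) : a = b ∧ x = y := by
  rcases le_total a b with hab | hab
  · obtain ⟨d, rfl⟩ := Nat.exists_eq_add_of_le hab
    have h' : (x + d • ρ) + a • ρ = y + a • ρ := by rw [← h, add_nsmul]; abel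
    have h'' : x + d • ρ = y := add_right_cancel h'
    have hd := no_step_of_not_ge hy h''
    subst hd
    simp only [zero_nsmul, add_zero] at h'' ⊢
    exact ⟨trivial, h''⟩
  · obtain ⟨d, rfl⟩ := Nat.exists_eq_add_of_le hab
    have h' : x + b • ρ = (y + d • ρ) + b • ρ := by rw [h, add_nsmul]; abel
    have h'' : y + d • ρ = x := (add_right_cancel h').symm
    have hd := no_step_of_not_ge hx h''
    subst hd
    simp only [zero_nsmul, add_zero] at h'' ⊢
    exact ⟨trivial, h''.symm⟩

/-- Maximal decomposition lemma: in a pointed cancellative finitely generated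
commutative monoid, every element can be written as `n • g + r` with `r` not
divisible by `g`. -/
lemma exists_max_decomp [AddMonoid.FG Λ]
    (hp : ∀ a b : Λ, a + b = 0 → a = 0 ∧ b = 0) {g : Λ} (hg : g ≠ 0) (x : Λ) :
    ∃ n : ℕ, ∃ r : Λ, n • g + r = x ∧ ¬ ∃ μ : Λ, g + μ = r := by
  by_contra hcon
  push_neg at hcon
  have key : ∀ n : ℕ, ∃ r : Λ, n • g + r = x := by
    intro n
    induction n with
    | zero => exact ⟨x, by simp⟩
    | succ k ih =>
      obtain ⟨r, hr⟩ := ih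
      obtain ⟨μ, hμ⟩ := hcon k r hr
      exact ⟨μ, by rw [← hr, ← hμ, succ_nsmul]; abel⟩
  choose r hr using key
  have hstep : ∀ {n m : ℕ}, n ≤ m → r n = (m - n) • g + r m := by
    intro n m hnm
    obtain ⟨d, rfl⟩ := Nat.exists_eq_add_of_le hnm
    have h : n • g + r n = n • g + (d • g + r (n + d)) := by
      rw [hr n, ← add_assoc, ← add_nsmul, hr (n + d)]
    simpa [Nat.add_sub_cancel_left] using add_left_cancel h
  obtain ⟨S, hS⟩ := (AddMonoid.FG.fg_top : (⊤ : AddSubmonoid Λ).FG)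
  have hmem : ∀ n, r n ∈ Submodule.span ℕ ((S : Set Λ)) := by
    intro n
    have : r n ∈ AddSubmonoid.closure (S : Set Λ) := by rw [hS]; trivial
    rw [← Submodule.span_nat_eq_addSubmonoidClosure] at this
    exact this
  choose v hv using fun n => (Submodule.mem_span_finset.mp (hmem n)).imp fun _ h => h.2
  have hpwo : (Set.univ : Set (↥S → ℕ)).IsPWO :=
    by simpa using (Set.IsPWO.pi (s := fun _ : ↥S => (Set.univ : Set ℕ))
      (fun _ => (Set.IsWF.of_wellFoundedLT _).isPWO))
  obtain ⟨a, b, hab, hle⟩ := hpwo.exists_lt (f := fun n (i : ↥S) => v n i.1) (fun _ => trivial)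
  have hd : r a + (∑ i ∈ S, (v b i - v a i) • i) = r b := by
    rw [← hv a, ← hv b, ← Finset.sum_add_distrib]
    refine Finset.sum_congr rfl fun i hi => ?_
    rw [← add_nsmul, Nat.add_sub_cancel' (hle ⟨i, hi⟩)]
  have h1 : r a = (b - a) • g + r b := hstep hab.le
  rw [← hd] at h1
  have h2 : r a + ((b - a) • g + ∑ i ∈ S, (v b i - v a i) • i) = r a + 0 := by
    rw [add_zero]
    nth_rewrite 2 [h1]
    abel
  have h3 : (b - a) • g + ∑ i ∈ S, (v b i - v a i) • i = 0 := by
    simpa using add_left_cancel h2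
  have h4 : (b - a) • g = 0 := (hp _ _ h3).1
  obtain ⟨t, ht⟩ : ∃ t, b - a = t + 1 :=
    ⟨b - a - 1, (Nat.succ_pred_eq_of_pos (Nat.sub_pos_of_lt hab)).symm⟩
  rw [ht, succ_nsmul] at h4
  exact hg (hp _ _ h4).2

end Helpers

section Glue

variable {Λ₁ Λ₂ : Type*} [AddCancelCommMonoid Λ₁] [AddCancelCommMonoid Λ₂]

/-- The explicit congruence containing the glueing congruence. -/
def RCon (ρ₁ : Λ₁) (ρ₂ : Λ₂) : AddCon (Λ₁ × Λ₂) where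
  r x y := ∃ n m : ℕ, x.1 + n • ρ₁ = y.1 + m • ρ₁ ∧ x.2 + m • ρ₂ = y.2 + n • ρ₂
  iseqv := by
    constructor
    · exact fun x => ⟨0, 0, rfl, rfl⟩
    · rintro x y ⟨n, m, h1, h2⟩; exact ⟨m, n, h1.symm, h2.symm⟩
    · rintro x y z ⟨n, m, h1, h2⟩ ⟨n', m', h1', h2'⟩
      refine ⟨n + n', m + m', ?_, ?_⟩
      · have h := congrArg₂ (· + ·) h1 h1'
        have e1 : (x.1 + n • ρ₁) + (y.1 + n' • ρ₁) = (x.1 + (n + n') • ρ₁) + y.1 := by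
          rw [add_nsmul]; abel
        have e2 : (y.1 + m • ρ₁) + (z.1 + m' • ρ₁) = (z.1 + (m + m') • ρ₁) + y.1 := by
          rw [add_nsmul]; abel
        rw [e1, e2] at h
        exact add_right_cancel h
      · have h := congrArg₂ (· + ·) h2 h2'
        have e1 : (x.2 + m • ρ₂) + (y.2 + m' • ρ₂) = (x.2 + (m + m') • ρ₂) + y.2 := by
          rw [add_nsmul]; abel
        have e2 : (y.2 + n • ρ₂) + (z.2 + n' • ρ₂) = (z.2 + (n + n') • ρ₂) + y.2 := by
          rw [add_nsmul]; abel
        rw [e1, e2] at h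
        exact add_right_cancel h
  add' := by
    rintro w x y z ⟨n, m, h1, h2⟩ ⟨n', m', h1', h2'⟩
    refine ⟨n + n', m + m', ?_, ?_⟩
    · have h := congrArg₂ (· + ·) h1 h1'
      have e1 : (w.1 + n • ρ₁) + (y.1 + n' • ρ₁) = (w + y).1 + (n + n') • ρ₁ := by
        rw [add_nsmul]; show _ = w.1 + y.1 + _; abel
      have e2 : (x.1 + m • ρ₁) + (z.1 + m' • ρ₁) = (x + z).1 + (m + m') • ρ₁ := by
        rw [add_nsmul]; show _ = x.1 + z.1 + _; abel
      rw [e1, e2] at h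
      exact h
    · have h := congrArg₂ (· + ·) h2 h2'
      have e1 : (w.2 + m • ρ₂) + (y.2 + m' • ρ₂) = (w + y).2 + (m + m') • ρ₂ := by
        rw [add_nsmul]; show _ = w.2 + y.2 + _; abel
      have e2 : (x.2 + n • ρ₂) + (z.2 + n' • ρ₂) = (x + z).2 + (n + n') • ρ₂ := by
        rw [add_nsmul]; show _ = x.2 + z.2 + _; abel
      rw [e1, e2] at h
      exact h

lemma glue_le_R (ρ₁ : Λ₁) (ρ₂ : Λ₂) : glueCon ρ₁ ρ₂ ≤ RCon ρ₁ ρ₂ := by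
  apply AddCon.addConGen_le.mpr
  rintro x y ⟨rfl, rfl⟩
  exact ⟨0, 1, by simp, by simp⟩

lemma glue_base (ρ₁ : Λ₁) (ρ₂ : Λ₂) : glueCon ρ₁ ρ₂ (ρ₁, 0) (0, ρ₂) :=
  AddConGen.Rel.of _ _ ⟨rfl, rfl⟩

lemma glue_chain (ρ₁ : Λ₁) (ρ₂ : Λ₂) (k : ℕ) (a : Λ₁) (b : Λ₂) :
    glueCon ρ₁ ρ₂ (a + k • ρ₁, b) (a, b + k • ρ₂) := by
  induction k generalizing b with
  | zero => simp only [zero_nsmul, add_zero]; exact (glueCon ρ₁ ρ₂).refl _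
  | succ t ih =>
    have step : glueCon ρ₁ ρ₂ ((a + t • ρ₁) + ρ₁, b) ((a + t • ρ₁), b + ρ₂) := by
      have := (glueCon ρ₁ ρ₂).add ((glueCon ρ₁ ρ₂).refl (a + t • ρ₁, b)) (glue_base ρ₁ ρ₂)
      simpa using this
    have htr := (glueCon ρ₁ ρ₂).trans step (ih (b + ρ₂))
    have e1 : a + (t + 1) • ρ₁ = a + t • ρ₁ + ρ₁ := by rw [succ_nsmul]; abel
    have e2 : b + (t + 1) • ρ₂ = b + ρ₂ + t • ρ₂ := by rw [succ_nsmul]; abel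
    rw [e1, e2]
    exact htr

end Glue

/-- in the glued monoid `Λ = (Λ₁ ⊕ Λ₂)/(ρ₁ ∼ ρ₂)` every element
is uniquely `n • ρ + λ̂₁ + λ̂₂` with `λ̂₁ ∈ Λ₁`, `λ̂₂ ∈ Λ₂`, `λ̂₁ ≱ ρ₁`,
`λ̂₂ ≱ ρ₂`. -/
theorem stmt14 {Λ₁ Λ₂ : Type*} [AddCancelCommMonoid Λ₁] [AddCancelCommMonoid Λ₂]
    [AddMonoid.FG Λ₁] [AddMonoid.FG Λ₂]
    (hpointed₁ : ∀ a b : Λ₁, a + b = 0 → a = 0 ∧ b = 0)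
    (hpointed₂ : ∀ a b : Λ₂, a + b = 0 → a = 0 ∧ b = 0)
    (ρ₁ : Λ₁) (ρ₂ : Λ₂)
    (hρ₁ : ∃ σ τ : Λ₁, σ ≠ 0 ∧ τ ≠ 0 ∧ σ + τ = ρ₁)
    (hρ₂ : ∃ σ τ : Λ₂, σ ≠ 0 ∧ τ ≠ 0 ∧ σ + τ = ρ₂) :
    ∀ l : (glueCon ρ₁ ρ₂).Quotient,
      ∃! w : ℕ × Λ₁ × Λ₂,
        (¬ ∃ μ : Λ₁, ρ₁ + μ = w.2.1) ∧ (¬ ∃ μ : Λ₂, ρ₂ + μ = w.2.2) ∧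
        w.1 • ((glueCon ρ₁ ρ₂).mk' (ρ₁, 0)) +
          (glueCon ρ₁ ρ₂).mk' (w.2.1, 0) + (glueCon ρ₁ ρ₂).mk' (0, w.2.2) = l := by
  have hρ₁ne : ρ₁ ≠ 0 := by
    rintro rfl
    obtain ⟨σ, τ, hσ, hτ, hστ⟩ := hρ₁
    exact hσ (hpointed₁ σ τ hστ).1
  have hρ₂ne : ρ₂ ≠ 0 := by
    rintro rfl
    obtain ⟨σ, τ, hσ, hτ, hστ⟩ := hρ₂
    exact hσ (hpointed₂ σ τ hστ).1
  have hmk : ∀ (n : ℕ) (u : Λ₁) (w : Λ₂),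
      n • ((glueCon ρ₁ ρ₂).mk' (ρ₁, 0)) + (glueCon ρ₁ ρ₂).mk' (u, 0) +
        (glueCon ρ₁ ρ₂).mk' (0, w) = (glueCon ρ₁ ρ₂).mk' (n • ρ₁ + u, w) := by
    intro n u w
    rw [← map_nsmul, ← map_add, ← map_add]
    congr 1
    simp [Prod.ext_iff]
  intro l
  induction l using AddCon.induction_on with
  | H p =>
  obtain ⟨x₁, x₂⟩ := p
  obtain ⟨a, l1, hl1, hl1m⟩ := exists_max_decomp hpointed₁ hρ₁ne x₁
  obtain ⟨b, l2, hl2, hl2m⟩ := exists_max_decomp hpointed₂ hρ₂ne x₂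
  have hrep : (glueCon ρ₁ ρ₂).mk' ((a + b) • ρ₁ + l1, l2) = ((x₁, x₂) : (glueCon ρ₁ ρ₂).Quotient) := by
    have hch := glue_chain ρ₁ ρ₂ b (a • ρ₁ + l1) l2
    have e1 : a • ρ₁ + l1 + b • ρ₁ = (a + b) • ρ₁ + l1 := by rw [add_nsmul]; abel
    have e2 : (x₁, x₂) = (a • ρ₁ + l1, l2 + b • ρ₂) := by
      rw [← hl1, ← hl2]
      exact Prod.ext rfl (add_comm _ _)
    rw [e1] at hch
    rw [e2]
    exact (AddCon.eq _).mpr hch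
  refine ⟨(a + b, l1, l2), ⟨hl1m, hl2m, ?_⟩, ?_⟩
  · rw [hmk]
    exact hrep
  · rintro ⟨n', m1, m2⟩ ⟨hm1, hm2, heq⟩
    rw [hmk] at heq
    have hcc : (glueCon ρ₁ ρ₂).mk' (n' • ρ₁ + m1, m2) =
        (glueCon ρ₁ ρ₂).mk' ((a + b) • ρ₁ + l1, l2) := heq.trans hrep.symm
    have hR := glue_le_R ρ₁ ρ₂ ((AddCon.eq _).mp hcc)
    obtain ⟨p, q, e1, e2⟩ := hR
    simp only at e1 e2
    obtain ⟨hpq, hm2l2⟩ := cancel_nsmul_aux e2 hm2 hl2m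
    subst hpq
    have e1' : m1 + (n' + p) • ρ₁ = l1 + ((a + b) + p) • ρ₁ := by
      rw [add_nsmul, add_nsmul]
      calc m1 + (n' • ρ₁ + p • ρ₁) = (n' • ρ₁ + m1) + p • ρ₁ := by abel
        _ = ((a + b) • ρ₁ + l1) + p • ρ₁ := by rw [e1]
        _ = l1 + ((a + b) • ρ₁ + p • ρ₁) := by abel
    obtain ⟨hn, hm1l1⟩ := cancel_nsmul_aux e1' hm1 hl1m
    have hn' : n' = a + b := by omega
    simp [Prod.ext_iff, hn', hm1l1, hm2l2]
end
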